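/- Let ε ≥ 0 and ρ_A a density operator on A. Then there exists a positive semidefinite operator Π_A ≤ Id_A, diagonal in an eigenbasis of ρ_A, such that H₀^ε(A)_ρ ≥ H₀(A)_{Π ρ Π} and P(Π_A ρ_A Π_A, ρ_A) ≤ sqrt(4ε), i.e., the zero-Rényi entropy can be smoothed by applying a projection-like compression while staying sqrt(4ε)-close in purified distance. -/

import Mathlib

open scoped Classical Kronecker ComplexOrder

noncomputable section

namespace QIT

variable {ι κ γ : Type*} [Fintype ι] [DecidableEq ι] [Fintype κ] [DecidableEq κ]
  [Fintype γ] [DecidableEq γ]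

/-- The old Mathlib `Matrix.PosSemidef.sqrt`, spelled out (removed from Mathlib). -/
def psdSqrt {A : Matrix ι ι ℂ} (hA : A.PosSemidef) : Matrix ι ι ℂ :=
  (hA.1.eigenvectorUnitary : Matrix ι ι ℂ) *
    Matrix.diagonal (((↑) : ℝ → ℂ) ∘ Real.sqrt ∘ hA.1.eigenvalues) *
    (star (hA.1.eigenvectorUnitary : Matrix ι ι ℂ))

/-- Trace norm `‖A‖₁ = tr √(AᴴA)`. -/
def traceNorm (A : Matrix ι ι ℂ) : ℝ :=
  (psdSqrt (Matrix.posSemidef_conjTranspose_mul_self A)).trace.re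

/-- Matrix square root (of a PSD matrix; junk value `0` otherwise). -/
def msqrt (A : Matrix ι ι ℂ) : Matrix ι ι ℂ :=
  if h : A.PosSemidef then psdSqrt h else 0

/-- Fidelity `F(ρ,σ) = ‖√ρ√σ‖₁`. -/
def fidelity (ρ σ : Matrix ι ι ℂ) : ℝ := traceNorm (msqrt ρ * msqrt σ)

/-- Generalized fidelity. -/
def genFid (ρ σ : Matrix ι ι ℂ) : ℝ :=
  fidelity ρ σ + Real.sqrt ((1 - ρ.trace.re) * (1 - σ.trace.re))

/-- Purified distance. -/
def purifiedDist (ρ σ : Matrix ι ι ℂ) : ℝ := Real.sqrt (1 - genFid ρ σ ^ 2)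

def IsSubnormalized (ρ : Matrix ι ι ℂ) : Prop := ρ.PosSemidef ∧ ρ.trace.re ≤ 1

def IsDensity (ρ : Matrix ι ι ℂ) : Prop := ρ.PosSemidef ∧ ρ.trace = 1

/-- Max-relative entropy `D_max(ρ‖σ) = inf {λ : 2^λ σ ≥ ρ}`. -/
def Dmax (ρ σ : Matrix ι ι ℂ) : ℝ :=
  sInf {l : ℝ | ((((2:ℝ) ^ l : ℝ) : ℂ) • σ - ρ).PosSemidef}

/-- Partial trace over the first factor. -/
def ptrace₁ (ρ : Matrix (ι × κ) (ι × κ) ℂ) : Matrix κ κ ℂ :=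
  Matrix.of fun (b b' : κ) => ∑ a, ρ (a, b) (a, b')

/-- Partial trace over the second factor. -/
def ptrace₂ (ρ : Matrix (ι × κ) (ι × κ) ℂ) : Matrix ι ι ℂ :=
  Matrix.of fun (a a' : ι) => ∑ b, ρ (a, b) (a', b)

/-- Max-information `I_max(A:B)_ρ = inf_{σ_B} D_max(ρ_{AB}‖ρ_A ⊗ σ_B)`. -/
def Imax (ρ : Matrix (ι × κ) (ι × κ) ℂ) : ℝ :=
  sInf {x : ℝ | ∃ σ : Matrix κ κ ℂ, IsDensity σ ∧ x = Dmax ρ (ptrace₂ ρ ⊗ₖ σ)}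

/-- Conditional min-entropy `H_min(A|B)_ρ = −inf_{σ_B} D_max(ρ_{AB}‖Id_A ⊗ σ_B)`. -/
def HminCond (ρ : Matrix (ι × κ) (ι × κ) ℂ) : ℝ :=
  - sInf {x : ℝ | ∃ σ : Matrix κ κ ℂ, IsDensity σ ∧ x = Dmax ρ ((1 : Matrix ι ι ℂ) ⊗ₖ σ)}

/-- Largest eigenvalue (operator norm for PSD matrices). -/
def maxEig (ρ : Matrix ι ι ℂ) : ℝ :=
  if h : ρ.IsHermitian then ⨆ i, h.eigenvalues i else 0

/-- Zero-Rényi entropy `H₀ = log rank`. -/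
def H0 (ρ : Matrix ι ι ℂ) : ℝ := Real.logb 2 ρ.rank

/-- Min-entropy `H_min = −log ‖ρ‖_∞`. -/
def Hmin (ρ : Matrix ι ι ℂ) : ℝ := - Real.logb 2 (maxEig ρ)

/-- Max-entropy `H_max = 2 log tr √ρ`. -/
def Hmax (ρ : Matrix ι ι ℂ) : ℝ := 2 * Real.logb 2 (msqrt ρ).trace.re

def smoothH0 (ε : ℝ) (ρ : Matrix ι ι ℂ) : ℝ :=
  sInf {x : ℝ | ∃ σ : Matrix ι ι ℂ, IsSubnormalized σ ∧ purifiedDist σ ρ ≤ ε ∧ x = H0 σ}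

def smoothHmax (ε : ℝ) (ρ : Matrix ι ι ℂ) : ℝ :=
  sInf {x : ℝ | ∃ σ : Matrix ι ι ℂ, IsSubnormalized σ ∧ purifiedDist σ ρ ≤ ε ∧ x = Hmax σ}

def smoothImax (ε : ℝ) (ρ : Matrix (ι × κ) (ι × κ) ℂ) : ℝ :=
  sInf {x : ℝ | ∃ σ : Matrix (ι × κ) (ι × κ) ℂ,
    IsSubnormalized σ ∧ purifiedDist σ ρ ≤ ε ∧ x = Imax σ}


/-!
Let `σ` attain the minimum defining `H₀^ε(A)_ρ` and let `P` be the projector onto its support.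
Hölder's inequality for the trace norm gives `F(σ, ρ)² ≤ tr σ · tr(P ρ)`, and since `0 ≤ P ≤ 1`
with `tr P = rank σ`, Ky Fan's maximum principle bounds `tr(P ρ)` by the sum `t` of the `rank σ`
largest eigenvalues of `ρ`. The projector `Q` onto the corresponding eigenvectors commutes with `ρ`,
`Q ρ Q` has rank at most `rank σ`, and `F(Q ρ Q, ρ) = t ≥ F(σ, ρ)² ≥ 1 - ε²`, whence
`P(Q ρ Q, ρ)² = 1 - t² ≤ 4ε`.
-/

open Matrix Finset

section MatrixOrder

open scoped MatrixOrder

lemma msqrt_eq_cfc_sqrt {A : Matrix ι ι ℂ} (hA : A.PosSemidef) : msqrt A = CFC.sqrt A := by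
  rw [msqrt, dif_pos hA, CFC.sqrt_eq_cfc, cfc_nnreal_eq_real _ A hA.nonneg, hA.1.cfc_eq, psdSqrt,
    IsHermitian.cfc, Unitary.conjStarAlgAut_apply]
  congr 3
  funext i
  simp [Real.coe_sqrt, Real.coe_toNNReal', hA.eigenvalues_nonneg i]

lemma posSemidef_msqrt {A : Matrix ι ι ℂ} (hA : A.PosSemidef) : (msqrt A).PosSemidef := by
  rw [msqrt_eq_cfc_sqrt hA]
  exact (CFC.sqrt_nonneg A).posSemidef

lemma msqrt_mul_self {A : Matrix ι ι ℂ} (hA : A.PosSemidef) : msqrt A * msqrt A = A := by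
  rw [msqrt_eq_cfc_sqrt hA]
  exact CFC.sqrt_mul_sqrt_self A hA.nonneg

lemma msqrt_eq_of_mul_self_eq {A B : Matrix ι ι ℂ} (hB : B.PosSemidef) (h : B * B = A) :
    msqrt A = B := by
  subst h
  have hBB : (B * B).PosSemidef := by
    simpa only [hB.1.eq] using posSemidef_conjTranspose_mul_self B
  rw [msqrt_eq_cfc_sqrt hBB, CFC.sqrt_mul_self B hB.nonneg]

omit [DecidableEq ι] in
lemma _root_.IsStarProjection.posSemidef {P : Matrix ι ι ℂ} (hP : IsStarProjection P) :
    P.PosSemidef :=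
  hP.nonneg.posSemidef

lemma _root_.IsStarProjection.posSemidef_one_sub {P : Matrix ι ι ℂ} (hP : IsStarProjection P) :
    (1 - P).PosSemidef :=
  hP.one_sub_nonneg.posSemidef

end MatrixOrder

omit [DecidableEq ι] in
lemma _root_.Matrix.PosSemidef.re_trace_nonneg {A : Matrix ι ι ℂ} (hA : A.PosSemidef) :
    0 ≤ A.trace.re :=
  (Complex.nonneg_iff.mp hA.trace_nonneg).1

lemma traceNorm_eq_re_trace_msqrt (A : Matrix ι ι ℂ) :
    traceNorm A = (msqrt (Aᴴ * A)).trace.re := by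
  rw [traceNorm, msqrt, dif_pos]

lemma traceNorm_nonneg (A : Matrix ι ι ℂ) : 0 ≤ traceNorm A := by
  rw [traceNorm_eq_re_trace_msqrt]
  exact (posSemidef_msqrt (posSemidef_conjTranspose_mul_self A)).re_trace_nonneg

lemma traceNorm_of_posSemidef {A : Matrix ι ι ℂ} (hA : A.PosSemidef) :
    traceNorm A = A.trace.re := by
  rw [traceNorm_eq_re_trace_msqrt, hA.1.eq, msqrt_eq_of_mul_self_eq hA rfl]

lemma re_trace_mul_le_sqrt_mul_sqrt (A B : Matrix ι ι ℂ) :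
    (A * B).trace.re ≤ √(Aᴴ * A).trace.re * √(B * Bᴴ).trace.re := by
  let _ := (1 : Matrix ι ι ℂ).toMatrixSeminormedAddCommGroup PosSemidef.one
  let _ := (1 : Matrix ι ι ℂ).toMatrixInnerProductSpace PosSemidef.one
  have h := re_inner_le_norm (𝕜 := ℂ) Aᴴ B
  rw [norm_eq_sqrt_re_inner (𝕜 := ℂ), norm_eq_sqrt_re_inner (𝕜 := ℂ)] at h
  change ((B * 1 * Aᴴᴴ).trace).re ≤ √((Aᴴ * 1 * Aᴴᴴ).trace).re * √((B * 1 * Bᴴ).trace).re at h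
  simp only [conjTranspose_conjTranspose, mul_one] at h
  rwa [trace_mul_comm B] at h

def unitaryDiag (U : unitaryGroup ι ℂ) (f : ι → ℝ) : Matrix ι ι ℂ :=
  Unitary.conjStarAlgAut ℂ _ U (diagonal fun i => (f i : ℂ))

lemma _root_.Matrix.IsHermitian.eq_unitaryDiag {A : Matrix ι ι ℂ} (hA : A.IsHermitian) :
    A = unitaryDiag hA.eigenvectorUnitary hA.eigenvalues :=
  hA.spectral_theorem

lemma _root_.Matrix.PosSemidef.exists_eq_unitaryDiag {A : Matrix ι ι ℂ} (hA : A.PosSemidef) :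
    ∃ (U : unitaryGroup ι ℂ) (f : ι → ℝ), 0 ≤ f ∧ A = unitaryDiag U f :=
  ⟨_, _, hA.eigenvalues_nonneg, hA.1.eq_unitaryDiag⟩

section unitaryDiag

variable (U : unitaryGroup ι ℂ) (f g : ι → ℝ)

lemma unitaryDiag_mul : unitaryDiag U f * unitaryDiag U g = unitaryDiag U (f * g) := by
  simp only [unitaryDiag, ← map_mul, diagonal_mul_diagonal, Pi.mul_apply, Complex.ofReal_mul]

lemma unitaryDiag_comm : unitaryDiag U f * unitaryDiag U g = unitaryDiag U g * unitaryDiag U f := by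
  rw [unitaryDiag_mul, unitaryDiag_mul, mul_comm]

lemma unitaryDiag_sub : unitaryDiag U f - unitaryDiag U g = unitaryDiag U (f - g) := by
  simp only [unitaryDiag, ← map_sub, diagonal_sub, Pi.sub_apply, Complex.ofReal_sub]

lemma unitaryDiag_one : unitaryDiag U 1 = 1 := by
  simp [unitaryDiag]

lemma isHermitian_unitaryDiag : (unitaryDiag U f).IsHermitian := by
  simp [IsHermitian, unitaryDiag, star_eq_conjTranspose, diagonal_conjTranspose, mul_assoc,
    Pi.star_def]

variable {f} in
lemma posSemidef_unitaryDiag (hf : 0 ≤ f) : (unitaryDiag U f).PosSemidef := by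
  have hd : (diagonal fun i => (f i : ℂ)).PosSemidef :=
    posSemidef_diagonal_iff.mpr fun i => by simpa using hf i
  simpa [unitaryDiag, star_eq_conjTranspose] using
    hd.mul_mul_conjTranspose_same (U : Matrix ι ι ℂ)

variable {f} in
lemma isStarProjection_unitaryDiag (hf : f * f = f) : IsStarProjection (unitaryDiag U f) :=
  ⟨by rw [IsIdempotentElem, unitaryDiag_mul, hf], (isHermitian_unitaryDiag U f).isSelfAdjoint⟩

lemma re_trace_unitaryDiag : (unitaryDiag U f).trace.re = ∑ i, f i := by
  simp [unitaryDiag, trace_mul_cycle (U : Matrix ι ι ℂ), trace_diagonal]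

lemma rank_unitaryDiag : (unitaryDiag U f).rank = Fintype.card {i // f i ≠ 0} := by
  have hU := UnitaryGroup.det_isUnit (star U)
  rw [Unitary.coe_star] at hU
  rw [unitaryDiag, Unitary.conjStarAlgAut_apply, rank_mul_eq_left_of_isUnit_det _ _ hU,
    rank_mul_eq_right_of_isUnit_det _ _ (UnitaryGroup.det_isUnit U), rank_diagonal]
  simp only [ne_eq, Complex.ofReal_eq_zero]

lemma rank_unitaryDiag_ite_le (T : Finset ι) :
    (unitaryDiag U fun i => if i ∈ T then f i else 0).rank ≤ #T := by
  rw [rank_unitaryDiag, Fintype.card_subtype]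
  exact card_le_card fun i => by simp +contextual

variable {f} in
lemma msqrt_unitaryDiag (hf : 0 ≤ f) :
    msqrt (unitaryDiag U f) = unitaryDiag U fun i => √(f i) :=
  msqrt_eq_of_mul_self_eq (posSemidef_unitaryDiag U fun i => Real.sqrt_nonneg _)
    (by rw [unitaryDiag_mul]; congr; ext i; exact Real.mul_self_sqrt (hf i))

variable {f g} in
lemma fidelity_unitaryDiag (hf : 0 ≤ f) (hg : 0 ≤ g) :
    fidelity (unitaryDiag U f) (unitaryDiag U g) = ∑ i, √(f i * g i) := by
  rw [fidelity, msqrt_unitaryDiag U hf, msqrt_unitaryDiag U hg, unitaryDiag_mul,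
    traceNorm_of_posSemidef (posSemidef_unitaryDiag U ?_), re_trace_unitaryDiag]
  · simp [Real.sqrt_mul (hf _)]
  · exact fun i => mul_nonneg (Real.sqrt_nonneg _) (Real.sqrt_nonneg _)

variable {f g} in
lemma purifiedDist_unitaryDiag (hf : 0 ≤ f) (hg : 0 ≤ g) (hg1 : ∑ i, g i = 1) :
    purifiedDist (unitaryDiag U f) (unitaryDiag U g) = √(1 - (∑ i, √(f i * g i)) ^ 2) := by
  simp [purifiedDist, genFid, fidelity_unitaryDiag U hf hg, re_trace_unitaryDiag, hg1]

end unitaryDiag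

lemma exists_mul_eq_msqrt (C : Matrix ι ι ℂ) :
    ∃ W : Matrix ι ι ℂ, W * C = msqrt (Cᴴ * C) ∧ (1 - W * Wᴴ).PosSemidef := by
  have hX := posSemidef_msqrt (posSemidef_conjTranspose_mul_self C)
  set V := hX.1.eigenvectorUnitary
  set x := hX.1.eigenvalues
  have hx : 0 ≤ x := hX.eigenvalues_nonneg
  have hXV : msqrt (Cᴴ * C) = unitaryDiag V x := hX.1.eq_unitaryDiag
  have hCC : Cᴴ * C = unitaryDiag V (x * x) := by
    rw [← unitaryDiag_mul, ← hXV, msqrt_mul_self (posSemidef_conjTranspose_mul_self C)]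
  -- `W = X⁺ Cᴴ` with `X⁺` the pseudo-inverse of `X = msqrt (Cᴴ * C)`, using `(0 : ℝ)⁻¹ = 0`
  have hXp := posSemidef_unitaryDiag V (f := x⁻¹) fun i => inv_nonneg.mpr (hx i)
  refine ⟨unitaryDiag V x⁻¹ * Cᴴ, ?_, ?_⟩
  · rw [hXV, mul_assoc, hCC, unitaryDiag_mul]
    congr 1; ext i; simp [← mul_assoc, inv_mul_mul_self]
  · rw [conjTranspose_mul, hXp.1.eq, conjTranspose_conjTranspose, mul_assoc, ← mul_assoc Cᴴ, hCC,
      unitaryDiag_mul, unitaryDiag_mul, ← unitaryDiag_one V, unitaryDiag_sub]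
    refine posSemidef_unitaryDiag V fun i => ?_
    by_cases h : x i = 0 <;> simp [h]

lemma traceNorm_mul_le_sqrt_mul_sqrt (A B : Matrix ι ι ℂ) :
    traceNorm (A * B) ≤ √(Aᴴ * A).trace.re * √(B * Bᴴ).trace.re := by
  obtain ⟨W, hWAB, hW⟩ := exists_mul_eq_msqrt (A * B)
  have hBW : (B * W * (B * W)ᴴ).trace.re ≤ (B * Bᴴ).trace.re := by
    have h := (hW.mul_mul_conjTranspose_same B).re_trace_nonneg
    rw [mul_sub, sub_mul, trace_sub, Complex.sub_re, mul_one] at h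
    rw [conjTranspose_mul]
    simpa only [mul_assoc, sub_nonneg] using h
  calc traceNorm (A * B) = (A * (B * W)).trace.re := by
        rw [traceNorm_eq_re_trace_msqrt, ← hWAB, trace_mul_comm, mul_assoc]
    _ ≤ √(Aᴴ * A).trace.re * √(B * W * (B * W)ᴴ).trace.re := re_trace_mul_le_sqrt_mul_sqrt _ _
    _ ≤ √(Aᴴ * A).trace.re * √(B * Bᴴ).trace.re := by gcongr

lemma fidelity_sq_le_of_msqrt_mul_eq {σ ρ P : Matrix ι ι ℂ} (hσ : σ.PosSemidef)
    (hρ : ρ.PosSemidef) (hP : IsStarProjection P) (hσP : msqrt σ * P = msqrt σ) :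
    fidelity σ ρ ^ 2 ≤ σ.trace.re * (P * ρ).trace.re := by
  have hsqrtσ := posSemidef_msqrt hσ
  have hsqrtρ := posSemidef_msqrt hρ
  have hPρ : (P * msqrt ρ * (P * msqrt ρ)ᴴ).trace = (P * ρ).trace := by
    rw [conjTranspose_mul, hsqrtρ.1.eq, ← star_eq_conjTranspose, hP.isSelfAdjoint.star_eq,
      mul_assoc, ← mul_assoc (msqrt ρ), msqrt_mul_self hρ, trace_mul_comm, mul_assoc,
      hP.isIdempotentElem.eq, trace_mul_comm]
  have hPρ0 : 0 ≤ (P * ρ).trace.re := by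
    rw [← hPρ]
    exact (posSemidef_self_mul_conjTranspose _).re_trace_nonneg
  have hF : fidelity σ ρ ≤ √σ.trace.re * √(P * ρ).trace.re := by
    calc fidelity σ ρ = traceNorm (msqrt σ * (P * msqrt ρ)) := by rw [fidelity, ← mul_assoc, hσP]
      _ ≤ _ := traceNorm_mul_le_sqrt_mul_sqrt _ _
      _ = _ := by rw [hsqrtσ.1.eq, msqrt_mul_self hσ, hPρ]
  calc fidelity σ ρ ^ 2 ≤ (√σ.trace.re * √(P * ρ).trace.re) ^ 2 := by
        gcongr; exact traceNorm_nonneg _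
    _ = σ.trace.re * (P * ρ).trace.re := by
        rw [mul_pow, Real.sq_sqrt hσ.re_trace_nonneg, Real.sq_sqrt hPρ0]

lemma _root_.Matrix.PosSemidef.exists_isStarProjection_msqrt_mul_eq {σ : Matrix ι ι ℂ}
    (hσ : σ.PosSemidef) :
    ∃ P : Matrix ι ι ℂ, IsStarProjection P ∧ P.trace.re = σ.rank ∧ msqrt σ * P = msqrt σ := by
  obtain ⟨V, μ, hμ, rfl⟩ := hσ.exists_eq_unitaryDiag
  let supp : ι → ℝ := fun i => if μ i = 0 then 0 else 1
  refine ⟨unitaryDiag V supp, isStarProjection_unitaryDiag _ ?_, ?_, ?_⟩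
  · ext i; by_cases h : μ i = 0 <;> simp [supp, h]
  · rw [re_trace_unitaryDiag, rank_unitaryDiag, Fintype.card_subtype]
    simp [supp, Finset.sum_ite]
  · rw [msqrt_unitaryDiag _ hμ, unitaryDiag_mul]
    congr 1; ext i; by_cases h : μ i = 0 <;> simp [supp, h]

lemma exists_top_finset (lam : ι → ℝ) (hlam : 0 ≤ lam) (k : ℕ) :
    ∃ (T : Finset ι) (m : ℝ), #T = min k (Fintype.card ι) ∧ 0 ≤ m ∧
      (∀ i ∈ T, m ≤ lam i) ∧ ∀ i ∉ T, lam i ≤ m := by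
  induction k with
  | zero =>
    refine ⟨∅, ∑ i, lam i, by simp, sum_nonneg fun i _ => hlam i, by simp, fun i _ => ?_⟩
    exact single_le_sum (fun j _ => hlam j) (mem_univ i)
  | succ k ih =>
    obtain ⟨T, m, hT, hm, hTm, hmT⟩ := ih
    by_cases hTuniv : #T = Fintype.card ι
    · exact ⟨T, m, by omega, hm, hTm, hmT⟩
    have hne : (univ \ T).Nonempty := by
      rw [sdiff_nonempty, univ_subset_iff]
      rintro rfl
      exact hTuniv (card_univ)
    obtain ⟨i₀, hi₀, hi₀max⟩ := (univ \ T).exists_max_image lam hne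
    have hi₀T : i₀ ∉ T := (mem_sdiff.mp hi₀).2
    refine ⟨insert i₀ T, lam i₀, ?_, hlam i₀, ?_, ?_⟩
    · rw [card_insert_of_notMem hi₀T]
      omega
    · simp only [mem_insert, forall_eq_or_imp, le_refl, true_and]
      exact fun i hi => (hmT i₀ hi₀T).trans (hTm i hi)
    · intro i hi
      rw [mem_insert, not_or] at hi
      exact hi₀max i (mem_sdiff.mpr ⟨mem_univ i, hi.2⟩)

lemma sum_mul_le_sum_of_threshold {T : Finset ι} {m : ℝ} {lam c : ι → ℝ} (hc0 : 0 ≤ c)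
    (hc1 : c ≤ 1) (hc : ∑ i, c i ≤ #T) (hm : 0 ≤ m) (hTm : ∀ i ∈ T, m ≤ lam i)
    (hmT : ∀ i ∉ T, lam i ≤ m) :
    ∑ i, c i * lam i ≤ ∑ i ∈ T, lam i := by
  let e : ι → ℝ := fun i => if i ∈ T then 1 else 0
  have hterm : ∀ i, (c i - e i) * (lam i - m) ≤ 0 := by
    intro i
    have h0 : 0 ≤ c i := hc0 i
    have h1 : c i ≤ 1 := hc1 i
    by_cases hi : i ∈ T
    · simp only [e, hi, if_true]; nlinarith [hTm i hi]
    · simp only [e, hi, if_false]; nlinarith [hmT i hi]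
  have hT : ∑ i ∈ T, lam i = ∑ i, e i * lam i := by simp [e]
  have hcard : (#T : ℝ) = ∑ i, e i := by simp [e]
  have hsplit : ∑ i, c i * lam i - ∑ i ∈ T, lam i - m * (∑ i, c i - #T) =
      ∑ i, (c i - e i) * (lam i - m) := by
    rw [hT, hcard, ← sum_sub_distrib, ← sum_sub_distrib, mul_sum, ← sum_sub_distrib]
    exact sum_congr rfl fun i _ => by ring
  have := sum_nonpos fun i (_ : i ∈ univ) => hterm i
  nlinarith

lemma exists_card_le_sum_mul_le (lam c : ι → ℝ) (hlam : 0 ≤ lam) (hc0 : 0 ≤ c) (hc1 : c ≤ 1)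
    {k : ℕ} (hk : ∑ i, c i ≤ k) :
    ∃ T : Finset ι, #T ≤ k ∧ ∑ i, c i * lam i ≤ ∑ i ∈ T, lam i := by
  obtain ⟨T, m, hT, hm, hTm, hmT⟩ := exists_top_finset lam hlam k
  refine ⟨T, hT ▸ min_le_left _ _, sum_mul_le_sum_of_threshold hc0 hc1 ?_ hm hTm hmT⟩
  have hn : ∑ i, c i ≤ Fintype.card ι := by
    simpa using sum_le_sum fun i (_ : i ∈ univ) => hc1 i
  rw [hT, Nat.cast_min]
  exact le_min hk hn

lemma exists_card_le_re_trace_mul_unitaryDiag_le (U : unitaryGroup ι ℂ) {lam : ι → ℝ}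
    (hlam : 0 ≤ lam) {P : Matrix ι ι ℂ} (hP : P.PosSemidef) (hP1 : (1 - P).PosSemidef) {k : ℕ}
    (hk : P.trace.re ≤ k) :
    ∃ T : Finset ι, #T ≤ k ∧ (P * unitaryDiag U lam).trace.re ≤ ∑ i ∈ T, lam i := by
  have hUU : (U : Matrix ι ι ℂ)ᴴ * U = 1 := Unitary.coe_star_mul_self U
  have hUU' : (U : Matrix ι ι ℂ) * (U : Matrix ι ι ℂ)ᴴ = 1 := Unitary.coe_mul_star_self U
  have hM : ((U : Matrix ι ι ℂ)ᴴ * P * U).PosSemidef := hP.conjTranspose_mul_mul_same _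
  have hM1 : (1 - (U : Matrix ι ι ℂ)ᴴ * P * U).PosSemidef := by
    simpa only [mul_sub, sub_mul, mul_one, hUU] using
      hP1.conjTranspose_mul_mul_same (U : Matrix ι ι ℂ)
  let c : ι → ℝ := fun i => (((U : Matrix ι ι ℂ)ᴴ * P * U) i i).re
  have hc0 : 0 ≤ c := fun i => (Complex.nonneg_iff.mp (hM.diag_nonneg (i := i))).1
  have hc1 : c ≤ 1 := fun i => by
    simpa [c] using (Complex.nonneg_iff.mp (hM1.diag_nonneg (i := i))).1
  have hsum : ∑ i, c i = P.trace.re := by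
    rw [show ∑ i, c i = ((U : Matrix ι ι ℂ)ᴴ * P * U).trace.re by simp [c, trace],
      trace_mul_cycle, hUU', one_mul]
  have htr : (P * unitaryDiag U lam).trace.re = ∑ i, c i * lam i := by
    rw [unitaryDiag, Unitary.conjStarAlgAut_apply, star_eq_conjTranspose, ← mul_assoc,
      ← mul_assoc, trace_mul_comm, ← mul_assoc, ← mul_assoc, trace, Complex.re_sum]
    refine sum_congr rfl fun i _ => ?_
    rw [diag_apply, mul_diagonal, Complex.re_mul_ofReal]
  rw [htr]
  exact exists_card_le_sum_mul_le _ c hlam hc0 hc1 (hsum ▸ hk)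

lemma IsDensity.exists_eq_unitaryDiag {ρ : Matrix ι ι ℂ} (hρ : IsDensity ρ) :
    ∃ (U : unitaryGroup ι ℂ) (f : ι → ℝ), 0 ≤ f ∧ ∑ i, f i = 1 ∧ ρ = unitaryDiag U f := by
  obtain ⟨U, f, hf, rfl⟩ := hρ.1.exists_eq_unitaryDiag
  refine ⟨U, f, hf, ?_, rfl⟩
  simpa [re_trace_unitaryDiag] using congrArg Complex.re hρ.2

lemma one_sub_sq_le_fidelity_sq {σ ρ : Matrix ι ι ℂ} (hρ : IsDensity ρ) {ε : ℝ}
    (h : purifiedDist σ ρ ≤ ε) : 1 - ε ^ 2 ≤ fidelity σ ρ ^ 2 := by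
  simp only [purifiedDist, genFid, hρ.2, Complex.one_re, sub_self, mul_zero, Real.sqrt_zero,
    add_zero, Real.sqrt_le_iff] at h
  linarith [h.2]

lemma purifiedDist_self {ρ : Matrix ι ι ℂ} (hρ : IsDensity ρ) : purifiedDist ρ ρ = 0 := by
  obtain ⟨U, lam, hlam, hsum, rfl⟩ := hρ.exists_eq_unitaryDiag
  rw [purifiedDist_unitaryDiag U hlam hlam hsum]
  simp [Real.sqrt_mul_self (hlam _), hsum]

omit [DecidableEq ι] in
lemma H0_le_H0_of_rank_le {A B : Matrix ι ι ℂ} (h : A.rank ≤ B.rank) : H0 A ≤ H0 B := by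
  rcases Nat.eq_zero_or_pos A.rank with h0 | hpos
  · rw [H0, h0, Nat.cast_zero, Real.logb_zero]
    exact div_nonneg (Real.log_natCast_nonneg _) (Real.log_nonneg one_le_two)
  · exact Real.logb_le_logb_of_le one_lt_two (by exact_mod_cast hpos) (by exact_mod_cast h)

lemma exists_smoothH0_eq {ε : ℝ} (hε : 0 ≤ ε) {ρ : Matrix ι ι ℂ} (hρ : IsDensity ρ) :
    ∃ σ, IsSubnormalized σ ∧ purifiedDist σ ρ ≤ ε ∧ smoothH0 ε ρ = H0 σ := by
  set S := {x : ℝ | ∃ σ : Matrix ι ι ℂ, IsSubnormalized σ ∧ purifiedDist σ ρ ≤ ε ∧ x = H0 σ}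
  have hne : S.Nonempty :=
    ⟨H0 ρ, ρ, ⟨hρ.1, by simp [hρ.2]⟩, (purifiedDist_self hρ).trans_le hε, rfl⟩
  have hfin : S.Finite := by
    refine ((Set.finite_Iic (Fintype.card ι)).image fun r : ℕ => Real.logb 2 r).subset ?_
    rintro x ⟨σ, -, -, rfl⟩
    exact ⟨σ.rank, rank_le_card_width σ, rfl⟩
  exact hne.csInf_mem hfin

lemma exists_compression (U : unitaryGroup ι ℂ) {lam : ι → ℝ} (hlam : 0 ≤ lam)
    (hsum : ∑ i, lam i = 1) (T : Finset ι) :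
    ∃ Q : Matrix ι ι ℂ, IsStarProjection Q ∧ Q * unitaryDiag U lam = unitaryDiag U lam * Q ∧
      (Q * unitaryDiag U lam * Q).rank ≤ #T ∧
      purifiedDist (Q * unitaryDiag U lam * Q) (unitaryDiag U lam) =
        √(1 - (∑ i ∈ T, lam i) ^ 2) := by
  set e : ι → ℝ := fun i => if i ∈ T then 1 else 0 with he
  have hQρQ : unitaryDiag U e * unitaryDiag U lam * unitaryDiag U e =
      unitaryDiag U fun i => if i ∈ T then lam i else 0 := by
    simp only [unitaryDiag_mul]
    congr 1; ext i; by_cases hi : i ∈ T <;> simp [he, hi]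
  have hT0 : 0 ≤ fun i => if i ∈ T then lam i else 0 := fun i => by
    simp only [Pi.zero_apply]
    split_ifs
    exacts [hlam i, le_rfl]
  have hfid : ∑ i, √((if i ∈ T then lam i else 0) * lam i) = ∑ i ∈ T, lam i := by
    simp_rw [ite_mul, zero_mul, apply_ite Real.sqrt, Real.sqrt_mul_self (hlam _), Real.sqrt_zero,
      sum_ite_mem, univ_inter]
  refine ⟨unitaryDiag U e, isStarProjection_unitaryDiag U ?_, unitaryDiag_comm U _ _, ?_, ?_⟩
  · ext i; by_cases hi : i ∈ T <;> simp [he, hi]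
  · rw [hQρQ]
    exact rank_unitaryDiag_ite_le U lam T
  · rw [hQρQ, purifiedDist_unitaryDiag U hT0 hlam hsum, hfid]

lemma one_sub_sq_le_four_mul {e t : ℝ} (he : 0 ≤ e) (ht : 1 - e ^ 2 ≤ t) :
    1 - t ^ 2 ≤ 4 * e := by
  rcases le_or_gt (1 - e ^ 2) 0 with h | h
  · nlinarith [sq_nonneg t]
  · have hsq := mul_self_le_mul_self h.le ht
    nlinarith [sq_nonneg e]

/-- The zero-Rényi entropy can be smoothed by applying a projection-like compression. -/
theorem smoothH0_by_projection (ε : ℝ) (hε : 0 ≤ ε) (ρ : Matrix ι ι ℂ) (hρ : IsDensity ρ) :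
    ∃ Q : Matrix ι ι ℂ, Q.PosSemidef ∧ (1 - Q).PosSemidef ∧ Q * ρ = ρ * Q ∧
      smoothH0 ε ρ ≥ H0 (Q * ρ * Q) ∧
      purifiedDist (Q * ρ * Q) ρ ≤ Real.sqrt (4 * ε) := by
  obtain ⟨σ, hσ, hσρ, hσmin⟩ := exists_smoothH0_eq hε hρ
  obtain ⟨P, hP, hPtr, hσP⟩ := hσ.1.exists_isStarProjection_msqrt_mul_eq
  obtain ⟨U, lam, hlam, hsum, rfl⟩ := hρ.exists_eq_unitaryDiag
  obtain ⟨T, hTσ, hPT⟩ := exists_card_le_re_trace_mul_unitaryDiag_le U hlam hP.posSemidef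
    hP.posSemidef_one_sub hPtr.le
  have ht : 1 - ε ^ 2 ≤ ∑ i ∈ T, lam i :=
    calc 1 - ε ^ 2 ≤ fidelity σ (unitaryDiag U lam) ^ 2 := one_sub_sq_le_fidelity_sq hρ hσρ
      _ ≤ σ.trace.re * (P * unitaryDiag U lam).trace.re :=
        fidelity_sq_le_of_msqrt_mul_eq hσ.1 hρ.1 hP hσP
      _ ≤ σ.trace.re * ∑ i ∈ T, lam i := mul_le_mul_of_nonneg_left hPT hσ.1.re_trace_nonneg
      _ ≤ ∑ i ∈ T, lam i := mul_le_of_le_one_left (sum_nonneg fun i _ => hlam i) hσ.2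
  obtain ⟨Q, hQ, hQρ, hrank, hdist⟩ := exists_compression U hlam hsum T
  refine ⟨Q, hQ.posSemidef, hQ.posSemidef_one_sub, hQρ, ?_, ?_⟩
  · rw [hσmin]
    exact H0_le_H0_of_rank_le (hrank.trans hTσ)
  · rw [hdist]
    exact Real.sqrt_le_sqrt (one_sub_sq_le_four_mul hε ht)

end QIT
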